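/- Let z be a real number with |z| < 1. Define sequences p, q by p(-1)=1, p(0)=0, q(-1)=0, q(0)=1, and for n ≥ 1: p(n) = (2n-1)·p(n-1) + b(n-1)·p(n-2), q(n) = (2n-1)·q(n-1) + b(n-1)·q(n-2), where b(0)=z and b(n) = -z²n² for n ≥ 1. Then p(n)/q(n) converges to artanh(z) = (1/2)·log((1+z)/(1-z)) as n → ∞. -/

import Mathlib

/-!
Compare the approximants with the integrals `S n = ∫_{-1}^{1} (1 - t²)ⁿ / (1 - z t)ⁿ⁺¹ dt`.
Integrating the derivative of `(1 - t²)ⁿ⁺¹ (z t² - 2 t + z) / (1 - z t)ⁿ⁺²` over `[-1, 1]` gives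
`(n + 2) z² S (n + 2) = 2 (2n + 3) S (n + 1) - 4 (n + 1) S n`, so `E n = n! z²ⁿ⁺¹ S n / 2ⁿ⁺¹`
satisfies the recurrence of `p` and `q`. As `E 0 = artanh z` and `E 1 = artanh z - z`, linearity
gives `q n · artanh z - p n = E n`. Since `1 - t² ≤ 2 (1 - z t)` on `[-1, 1]`, `S n ≤ 2ⁿ S 0`, so
`|E n| ≤ n! z²ⁿ C`; and the recurrence forces `q n ≥ n!`. Hence `p n / q n → artanh z`
geometrically, with ratio `z²`.
-/

open Filter Real Set intervalIntegral
open scoped Nat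

theorem eq_of_two_step_recurrence {R : Type*} [Semiring R] {a c u v : ℕ → R}
    (hu : ∀ n, u (n + 2) = a n * u (n + 1) + c n * u n)
    (hv : ∀ n, v (n + 2) = a n * v (n + 1) + c n * v n)
    (h0 : u 0 = v 0) (h1 : u 1 = v 1) : u = v := by
  have key : ∀ n, u n = v n ∧ u (n + 1) = v (n + 1) := by
    intro n
    induction n with
    | zero => exact ⟨h0, h1⟩
    | succ n ih => exact ⟨ih.2, by rw [hu, hv, ih.1, ih.2]⟩
  exact funext fun n => (key n).1

theorem tendsto_div_of_abs_sub_le_factorial_mul {p q : ℕ → ℝ} {A r C : ℝ} (hr₀ : 0 ≤ r)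
    (hr₁ : r < 1) (hq : ∀ n, (n ! : ℝ) ≤ q n) (hE : ∀ n, |q n * A - p n| ≤ n ! * r ^ n * C) :
    Tendsto (fun n => p n / q n) atTop (nhds A) := by
  have hq_pos : ∀ n, 0 < q n := fun n => (Nat.cast_pos.2 n.factorial_pos).trans_le (hq n)
  have hbound : ∀ n, ‖p n / q n - A‖ ≤ r ^ n * C := by
    intro n
    have hC : 0 ≤ r ^ n * C := nonneg_of_mul_nonneg_right
      (by simpa only [mul_assoc] using (abs_nonneg _).trans (hE n)) (by positivity)
    rw [Real.norm_eq_abs, div_sub' (hq_pos n).ne', abs_div, abs_sub_comm, abs_of_pos (hq_pos n),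
      div_le_iff₀ (hq_pos n)]
    calc _ ≤ n ! * (r ^ n * C) := by rw [← mul_assoc]; exact hE n
      _ ≤ q n * (r ^ n * C) := mul_le_mul_of_nonneg_right (hq n) hC
      _ = r ^ n * C * q n := mul_comm _ _
  have hlim := (tendsto_pow_atTop_nhds_zero_of_lt_one hr₀ hr₁).mul_const C
  rw [zero_mul] at hlim
  exact tendsto_sub_nhds_zero_iff.1 (squeeze_zero_norm hbound hlim)

section Recurrence

variable {z : ℝ} {u : ℕ → ℝ}

theorem succ_mul_le_of_recurrence (hz : z ^ 2 ≤ 1)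
    (hu : ∀ n : ℕ, u (n + 2) = (2 * n + 3) * u (n + 1) - z ^ 2 * (n + 1) ^ 2 * u n)
    (h0 : 0 ≤ u 0) (h1 : u 0 ≤ u 1) (n : ℕ) : 0 ≤ u n ∧ (n + 1) * u n ≤ u (n + 1) := by
  induction n with
  | zero => simpa using ⟨h0, h1⟩
  | succ n ih =>
    obtain ⟨hpos, hle⟩ := ih
    have hpos' : 0 ≤ u (n + 1) := le_trans (by positivity) hle
    refine ⟨hpos', ?_⟩
    push_cast
    rw [hu]
    have h : z ^ 2 * ((n + 1) * u n) ≤ u (n + 1) :=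
      le_trans (mul_le_of_le_one_left (by positivity) hz) hle
    have := mul_le_mul_of_nonneg_left h n.cast_add_one_pos.le
    linarith

theorem factorial_mul_le_of_recurrence (hz : z ^ 2 ≤ 1)
    (hu : ∀ n : ℕ, u (n + 2) = (2 * n + 3) * u (n + 1) - z ^ 2 * (n + 1) ^ 2 * u n)
    (h0 : 0 ≤ u 0) (h1 : u 0 ≤ u 1) (n : ℕ) : n ! * u 0 ≤ u n := by
  induction n with
  | zero => simp
  | succ n ih =>
    calc ((n + 1 : ℕ)! : ℝ) * u 0 = (n + 1) * (n ! * u 0) := by push_cast [Nat.factorial_succ]; ring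
      _ ≤ (n + 1) * u n := by gcongr
      _ ≤ u (n + 1) := (succ_mul_le_of_recurrence hz hu h0 h1 n).2

end Recurrence

theorem recurrence_one_of_int {z : ℝ} {b u : ℤ → ℝ} (hb0 : b 0 = z)
    (hu : ∀ n : ℤ, 1 ≤ n → u n = (2 * (n : ℝ) - 1) * u (n - 1) + b (n - 1) * u (n - 2)) :
    u 1 = u 0 + z * u (-1) := by
  have h := hu 1 le_rfl
  norm_num [hb0] at h
  exact h

theorem recurrence_add_two_of_int {z : ℝ} {b u : ℤ → ℝ}
    (hb : ∀ n : ℤ, 1 ≤ n → b n = -z ^ 2 * (n : ℝ) ^ 2)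
    (hu : ∀ n : ℤ, 1 ≤ n → u n = (2 * (n : ℝ) - 1) * u (n - 1) + b (n - 1) * u (n - 2))
    (n : ℕ) : u ↑(n + 2) = (2 * n + 3) * u ↑(n + 1) - z ^ 2 * (n + 1) ^ 2 * u n := by
  have h := hu (n + 2) (by omega)
  rw [show (n : ℤ) + 2 - 1 = n + 1 by ring, show (n : ℤ) + 2 - 2 = n by ring,
    hb (n + 1) (by omega)] at h
  push_cast at h ⊢
  linear_combination h

namespace ArtanhCF

noncomputable def integrand (z : ℝ) (n : ℕ) (t : ℝ) : ℝ := (1 - t ^ 2) ^ n / (1 - z * t) ^ (n + 1)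

noncomputable def remainderIntegral (z : ℝ) (n : ℕ) : ℝ := ∫ t in (-1 : ℝ)..1, integrand z n t

noncomputable def boundaryTerm (z : ℝ) (j : ℕ) (t : ℝ) : ℝ :=
  (1 - t ^ 2) ^ j * (z * t ^ 2 - 2 * t + z) / (1 - z * t) ^ (j + 1)

variable {z : ℝ}

theorem one_sub_mul_pos (hz : |z| < 1) {t : ℝ} (ht : t ∈ uIcc (-1 : ℝ) 1) : 0 < 1 - z * t := by
  rw [uIcc_of_le (by norm_num)] at ht
  have : |z * t| < 1 := by
    rw [abs_mul]
    exact mul_lt_one_of_nonneg_of_lt_one_left (abs_nonneg z) hz (abs_le.2 ht)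
  linarith [le_abs_self (z * t)]

theorem intervalIntegrable_integrand (hz : |z| < 1) (n : ℕ) :
    IntervalIntegrable (integrand z n) MeasureTheory.volume (-1) 1 :=
  ContinuousOn.intervalIntegrable <| ContinuousOn.div (by fun_prop) (by fun_prop)
    fun _ ht => pow_ne_zero _ (one_sub_mul_pos hz ht).ne'

/-- For `j = 0` the truncated `j - 1` is harmless: its coefficient `4 j` vanishes. -/
theorem hasDerivAt_boundaryTerm (j : ℕ) {t : ℝ} (ht : 1 - z * t ≠ 0) :
    HasDerivAt (boundaryTerm z j)
      ((j + 1) * z ^ 2 * integrand z (j + 1) t - 2 * (2 * j + 1) * integrand z j t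
        + 4 * j * integrand z (j - 1) t) t := by
  have hA : HasDerivAt (fun t : ℝ => (1 - t ^ 2) ^ j)
      (j * (1 - t ^ 2) ^ (j - 1) * (-(2 * t))) t := by
    simpa using ((hasDerivAt_pow 2 t).const_sub 1).fun_pow j
  have hB : HasDerivAt (fun t : ℝ => z * t ^ 2 - 2 * t + z) (z * (2 * t) - 2) t := by
    simpa using (((hasDerivAt_pow 2 t).const_mul z).sub ((hasDerivAt_id t).const_mul 2)).add_const z
  have hC : HasDerivAt (fun t : ℝ => (1 - z * t) ^ (j + 1))
      ((j + 1) * (1 - z * t) ^ j * (-z)) t := by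
    simpa using (((hasDerivAt_id t).const_mul z).const_sub 1).fun_pow (j + 1)
  refine ((hA.mul hB).div hC (pow_ne_zero _ ht)).congr_deriv ?_
  simp only [integrand, Pi.mul_apply]
  have ht' : 1 - t * z ≠ 0 := by rwa [mul_comm]
  rcases j with _ | k
  · simp only [CharP.cast_eq_zero, zero_mul, zero_add, mul_zero, add_zero, pow_zero, pow_one]
    field_simp
    ring
  · simp only [Nat.add_sub_cancel]
    field_simp
    ring

theorem integral_boundaryTerm_deriv (hz : |z| < 1) (j : ℕ) :
    (j + 1) * z ^ 2 * remainderIntegral z (j + 1) - 2 * (2 * j + 1) * remainderIntegral z j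
      + 4 * j * remainderIntegral z (j - 1) = boundaryTerm z j 1 - boundaryTerm z j (-1) := by
  have hI := intervalIntegrable_integrand hz
  rw [← integral_eq_sub_of_hasDerivAt
    (fun t ht => hasDerivAt_boundaryTerm j (one_sub_mul_pos hz ht).ne')
    ((((hI _).const_mul _).sub ((hI _).const_mul _)).add ((hI _).const_mul _)),
    integral_add (((hI _).const_mul _).sub ((hI _).const_mul _)) ((hI _).const_mul _),
    integral_sub ((hI _).const_mul _) ((hI _).const_mul _)]
  simp only [integral_const_mul, remainderIntegral]

theorem remainderIntegral_one (hz : |z| < 1) :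
    z ^ 2 * remainderIntegral z 1 = 2 * remainderIntegral z 0 - 4 := by
  have h := integral_boundaryTerm_deriv hz 0
  have h1 : boundaryTerm z 0 1 = -2 := by
    rw [boundaryTerm, div_eq_iff (by norm_num; linarith [(abs_lt.1 hz).2])]
    ring
  have h2 : boundaryTerm z 0 (-1) = 2 := by
    rw [boundaryTerm, div_eq_iff (by norm_num; linarith [(abs_lt.1 hz).1])]
    ring
  rw [h1, h2] at h
  norm_num at h
  linear_combination h

theorem remainderIntegral_add_two (hz : |z| < 1) (k : ℕ) :
    (k + 2) * z ^ 2 * remainderIntegral z (k + 2)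
      = 2 * (2 * k + 3) * remainderIntegral z (k + 1) - 4 * (k + 1) * remainderIntegral z k := by
  have h := integral_boundaryTerm_deriv hz (k + 1)
  simp only [boundaryTerm, Nat.add_sub_cancel] at h
  norm_num at h
  linear_combination h

theorem mul_remainderIntegral_zero (hz : |z| < 1) :
    z * remainderIntegral z 0 = Real.log ((1 + z) / (1 - z)) := by
  have hderiv : ∀ t ∈ uIcc (-1 : ℝ) 1,
      HasDerivAt (fun t => -Real.log (1 - z * t)) (z * integrand z 0 t) t := by
    intro t ht
    have hpos := one_sub_mul_pos hz ht
    refine ((((hasDerivAt_id t).const_mul z).const_sub 1).log hpos.ne').neg.congr_deriv ?_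
    simp only [mul_one, id_eq, integrand, pow_zero, zero_add, pow_one, one_div]
    field_simp
  rw [remainderIntegral, ← integral_const_mul,
    integral_eq_sub_of_hasDerivAt hderiv ((intervalIntegrable_integrand hz 0).const_mul z),
    Real.log_div (by linarith [(abs_lt.1 hz).1]) (by linarith [(abs_lt.1 hz).2])]
  norm_num
  ring

theorem integrand_nonneg (hz : |z| < 1) (n : ℕ) {t : ℝ} (ht : t ∈ uIcc (-1 : ℝ) 1) :
    0 ≤ integrand z n t := by
  rw [uIcc_of_le (by norm_num)] at ht
  have : 0 ≤ 1 - t ^ 2 := by nlinarith [ht.1, ht.2]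
  have := one_sub_mul_pos hz (by rwa [uIcc_of_le (by norm_num)])
  unfold integrand
  positivity

theorem integrand_le (hz : |z| < 1) (n : ℕ) {t : ℝ} (ht : t ∈ uIcc (-1 : ℝ) 1) :
    integrand z n t ≤ 2 ^ n * integrand z 0 t := by
  have hpos := one_sub_mul_pos hz ht
  rw [uIcc_of_le (by norm_num)] at ht
  -- `2 (1 - z t) - (1 - t²) = (t - z)² + (1 - z²)`
  have key : 1 - t ^ 2 ≤ 2 * (1 - z * t) := by nlinarith [sq_nonneg (t - z), sq_abs z, abs_nonneg z]
  have hn : (1 - t ^ 2) ^ n ≤ (2 * (1 - z * t)) ^ n :=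
    pow_le_pow_left₀ (by nlinarith [ht.1, ht.2]) key n
  calc integrand z n t ≤ (2 * (1 - z * t)) ^ n / (1 - z * t) ^ (n + 1) := by
        unfold integrand; gcongr
    _ = 2 ^ n * integrand z 0 t := by
        simp only [integrand, pow_zero, zero_add, mul_pow, pow_succ]
        field_simp

theorem remainderIntegral_nonneg (hz : |z| < 1) (n : ℕ) : 0 ≤ remainderIntegral z n :=
  integral_nonneg (by norm_num) fun t ht => integrand_nonneg hz n (by
    rwa [uIcc_of_le (by norm_num)])

theorem remainderIntegral_le (hz : |z| < 1) (n : ℕ) :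
    remainderIntegral z n ≤ 2 ^ n * remainderIntegral z 0 := by
  rw [remainderIntegral, remainderIntegral, ← integral_const_mul]
  exact integral_mono_on (by norm_num) (intervalIntegrable_integrand hz n)
    ((intervalIntegrable_integrand hz 0).const_mul _) fun t ht => integrand_le hz n (by
      rwa [uIcc_of_le (by norm_num)])

noncomputable def remainder (z : ℝ) (n : ℕ) : ℝ :=
  n ! * z ^ (2 * n + 1) / 2 ^ (n + 1) * remainderIntegral z n

theorem remainder_zero (hz : |z| < 1) :
    remainder z 0 = 1 / 2 * Real.log ((1 + z) / (1 - z)) := by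
  rw [← mul_remainderIntegral_zero hz, remainder]
  ring

theorem remainder_one (hz : |z| < 1) :
    remainder z 1 = 1 / 2 * Real.log ((1 + z) / (1 - z)) - z := by
  rw [← mul_remainderIntegral_zero hz, remainder]
  linear_combination z / 4 * remainderIntegral_one hz

theorem remainder_add_two (hz : |z| < 1) (n : ℕ) :
    remainder z (n + 2)
      = (2 * n + 3) * remainder z (n + 1) - z ^ 2 * (n + 1) ^ 2 * remainder z n := by
  simp only [remainder, Nat.factorial_succ]
  push_cast
  linear_combination (n + 1) * n ! * z ^ (2 * n + 3) / 2 ^ (n + 3) * remainderIntegral_add_two hz n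

theorem abs_remainder_le (hz : |z| < 1) (n : ℕ) :
    |remainder z n| ≤ n ! * (z ^ 2) ^ n * (|z| * remainderIntegral z 0 / 2) := by
  have h := remainderIntegral_le hz n
  have habs :
      |remainder z n| = n ! * ((z ^ 2) ^ n * |z|) / 2 ^ (n + 1) * remainderIntegral z n := by
    rw [remainder, abs_mul, abs_of_nonneg (remainderIntegral_nonneg hz n), abs_div, abs_mul,
      Nat.abs_cast, abs_pow, abs_pow, abs_two, pow_succ, pow_mul, sq_abs]
  rw [habs]
  calc _ ≤ n ! * ((z ^ 2) ^ n * |z|) / 2 ^ (n + 1) * (2 ^ n * remainderIntegral z 0) := by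
        gcongr
    _ = _ := by
        field_simp
        ring

end ArtanhCF

open ArtanhCF in
theorem artanh_cf (z : ℝ) (hz : |z| < 1) (p q b : ℤ → ℝ)
    (hb0 : b 0 = z) (hb : ∀ n : ℤ, 1 ≤ n → b n = -z ^ 2 * (n : ℝ) ^ 2)
    (hpm1 : p (-1) = 1) (hp0 : p 0 = 0) (hqm1 : q (-1) = 0) (hq0 : q 0 = 1)
    (hp : ∀ n : ℤ, 1 ≤ n →
      p n = (2 * (n : ℝ) - 1) * p (n - 1) + b (n - 1) * p (n - 2))
    (hq : ∀ n : ℤ, 1 ≤ n →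
      q n = (2 * (n : ℝ) - 1) * q (n - 1) + b (n - 1) * q (n - 2)) :
    Tendsto (fun n : ℕ => p n / q n) atTop
      (nhds ((1 / 2) * Real.log ((1 + z) / (1 - z)))) := by
  set A := 1 / 2 * Real.log ((1 + z) / (1 - z))
  have hp1 : p 1 = z := by rw [recurrence_one_of_int hb0 hp, hp0, hpm1]; ring
  have hq1 : q 1 = 1 := by rw [recurrence_one_of_int hb0 hq, hq0, hqm1]; ring
  have hq_ge : ∀ n : ℕ, (n ! : ℝ) ≤ q n := fun n => by
    simpa [hq0] using factorial_mul_le_of_recurrence (u := fun n : ℕ => q n)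
      ((sq_le_one_iff_abs_le_one z).2 hz.le) (recurrence_add_two_of_int hb hq)
      (by simp [hq0]) (by simp [hq0, hq1]) n
  have herr : ∀ n : ℕ, q n * A - p n = remainder z n := congrFun <|
    eq_of_two_step_recurrence (u := fun n : ℕ => q n * A - p n)
      (a := fun n : ℕ => (2 * n + 3 : ℝ)) (c := fun n : ℕ => -(z ^ 2 * (n + 1) ^ 2))
      (fun n => by
        simp only [recurrence_add_two_of_int hb hp, recurrence_add_two_of_int hb hq]; ring)
      (fun n => by rw [remainder_add_two hz]; ring)
      (by simp [hp0, hq0, remainder_zero hz, A]) (by simp [hp1, hq1, remainder_one hz, A])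
  exact tendsto_div_of_abs_sub_le_factorial_mul (sq_nonneg z) ((sq_lt_one_iff_abs_lt_one z).2 hz)
    hq_ge fun n => herr n ▸ abs_remainder_le hz n
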